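/- arXiv:math/0610476 — 3 statements merged into one kernel-verified Lean document; each statement's English description precedes it below -/
import Mathlib

section
/- The map f : G₀ → Gτ, x ↦ (x,1)τ, induces a bijection from the set of conjugacy classes of G₀ onto the set of conjugacy classes of G̃ that are contained in the coset Gτ; that is, x and y are conjugate in G₀ if and only if (x,1)τ and (y,1)τ are conjugate in G̃, and every conjugacy class of G̃ contained in Gτ contains an element of the form (x,1)τ. -/
/-!
On the coset `Gτ` the conjugacy class of `g₁ g₂` in `G₀` is a complete invariant of `(g₁, g₂)τ`.
Conjugating by `(c, d) ∈ G` turns `(g₁, g₂)τ` into `(c g₁ d⁻¹, d g₂ c⁻¹)τ`, replacing `g₁ g₂` by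
`c g₁ g₂ c⁻¹`, and conjugating by `τ` swaps `g₁` and `g₂`, replacing `g₁ g₂` by the conjugate
`g₂ g₁`. Conversely `(1, g₂⁻¹)` conjugates `(g₁, g₂)τ` to `(g₁ g₂, 1)τ`, and `(c, c)` conjugates
`(x, 1)τ` to `(c x c⁻¹, 1)τ`.
-/

open SemidirectProduct

/-- The swap automorphism of `G₀ × G₀` (the automorphism `τ` of `G = G₀ × G₀`). -/
def swapAut (G₀ : Type*) [Group G₀] : MulAut (G₀ × G₀) :=
  (MulEquiv.prodComm : (G₀ × G₀) ≃* (G₀ × G₀))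

lemma swapAut_sq (G₀ : Type*) [Group G₀] : swapAut G₀ ^ 2 = 1 := by
  ext x <;> simp [pow_succ, swapAut]

/-- The homomorphism from the cyclic group of order two (written multiplicatively as
`Multiplicative (ZMod 2)`) determined by an involution. -/
def involHom {M : Type*} [Group M] (a : M) (ha : a ^ 2 = 1) :
    Multiplicative (ZMod 2) →* M :=
  MonoidHom.mk' (fun x => a ^ (Multiplicative.toAdd x).val)
    (fun x y => by
      show a ^ (Multiplicative.toAdd (x * y)).val = _
      rw [toAdd_mul, ZMod.val_add, ← pow_eq_pow_mod _ ha, pow_add])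

/-- The action of the cyclic group of order two on `G₀ × G₀` by swapping the factors. -/
def swapHom (G₀ : Type*) [Group G₀] : Multiplicative (ZMod 2) →* MulAut (G₀ × G₀) :=
  involHom (swapAut G₀) (swapAut_sq G₀)

/-- `G̃ = G ⋊ ⟨τ⟩`, the semidirect product of `G = G₀ × G₀` with a cyclic group of order
two whose generator `τ` acts by the swap automorphism. -/
abbrev Gt (G₀ : Type*) [Group G₀] := (G₀ × G₀) ⋊[swapHom G₀] Multiplicative (ZMod 2)

/-- The element `τ` of `G̃`. -/
def tau (G₀ : Type*) [Group G₀] : Gt G₀ := inr (Multiplicative.ofAdd 1)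

namespace Gt

variable {G₀ : Type*} [Group G₀]

@[simp]
lemma swapHom_ofAdd_one (p : G₀ × G₀) : swapHom G₀ (Multiplicative.ofAdd 1) p = p.swap := by
  show (swapAut G₀ ^ (1 : ZMod 2).val) p = p.swap
  simp [ZMod.val_one, swapAut]

lemma eq_one_or_eq_ofAdd_one (s : Multiplicative (ZMod 2)) :
    s = 1 ∨ s = Multiplicative.ofAdd 1 := by
  revert s; decide

@[simp]
lemma tau_mul_tau : tau G₀ * tau G₀ = 1 := by
  rw [tau, ← map_mul, ← map_one inr]; rfl

@[simp]
lemma tau_inv : (tau G₀)⁻¹ = tau G₀ :=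
  inv_eq_of_mul_eq_one_right tau_mul_tau

lemma tau_mul_inl (p : G₀ × G₀) : tau G₀ * inl p = inl p.swap * tau G₀ := by
  ext <;> simp [tau]

lemma exists_eq_inl_or_eq_inl_mul_tau (u : Gt G₀) :
    ∃ r, u = inl r ∨ u = inl r * tau G₀ := by
  refine ⟨u.left, ?_⟩
  rcases eq_one_or_eq_ofAdd_one u.right with h | h
  · exact .inl (by ext <;> simp [h])
  · exact .inr (by ext <;> simp [tau, h])

lemma eq_inl_mul_tau_of_right_eq {z : Gt G₀} (hz : z.right = Multiplicative.ofAdd 1) :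
    z = inl z.left * tau G₀ := by
  ext <;> simp [tau, hz]

lemma inl_conj_inl_mul_tau (r p : G₀ × G₀) :
    inl r * (inl p * tau G₀) * (inl r)⁻¹ = inl (r * p * r.swap⁻¹) * tau G₀ := by
  rw [← map_inv, mul_assoc, mul_assoc, tau_mul_inl, ← mul_assoc, ← mul_assoc, ← map_mul,
    ← map_mul, Prod.swap_inv]

lemma tau_conj_inl_mul_tau (p : G₀ × G₀) :
    tau G₀ * (inl p * tau G₀) * (tau G₀)⁻¹ = inl p.swap * tau G₀ := by
  rw [tau_inv, ← mul_assoc, tau_mul_inl, mul_assoc, tau_mul_tau, mul_one]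

lemma isConj_inl_mul_tau_inl_mul_one_mul_tau (p : G₀ × G₀) :
    IsConj (inl p * tau G₀) (inl (p.1 * p.2, 1) * tau G₀) := by
  refine isConj_iff.2 ⟨inl (1, p.2⁻¹), ?_⟩
  rw [inl_conj_inl_mul_tau]
  ext <;> simp

lemma isConj_mul_of_inl_conj (r p q : G₀ × G₀)
    (h : inl r * (inl p * tau G₀) * (inl r)⁻¹ = inl q * tau G₀) :
    IsConj (p.1 * p.2) (q.1 * q.2) := by
  rw [inl_conj_inl_mul_tau, mul_left_inj, inl_inj] at h
  subst h
  exact isConj_iff.2 ⟨r.1, by simp [mul_assoc]⟩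

theorem isConj_inl_mul_tau_iff (p q : G₀ × G₀) :
    IsConj (inl p * tau G₀) (inl q * tau G₀) ↔ IsConj (p.1 * p.2) (q.1 * q.2) := by
  constructor
  · intro h
    obtain ⟨u, hu⟩ := isConj_iff.1 h
    obtain ⟨r, rfl | rfl⟩ := exists_eq_inl_or_eq_inl_mul_tau u
    · exact isConj_mul_of_inl_conj r p q hu
    · have hconj : inl r * tau G₀ * (inl p * tau G₀) * (inl r * tau G₀)⁻¹ =
          inl r * (tau G₀ * (inl p * tau G₀) * (tau G₀)⁻¹) * (inl r)⁻¹ := by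
        group
      rw [hconj, tau_conj_inl_mul_tau] at hu
      exact (isConj_iff.2 ⟨p.1⁻¹, by simp⟩).trans
        (isConj_mul_of_inl_conj r p.swap q hu)
  · intro h
    obtain ⟨c, hc⟩ := isConj_iff.1 h
    refine (isConj_inl_mul_tau_inl_mul_one_mul_tau p).trans
      (.trans (isConj_iff.2 ⟨inl (c, c), ?_⟩) (isConj_inl_mul_tau_inl_mul_one_mul_tau q).symm)
    rw [inl_conj_inl_mul_tau]
    ext <;> simp [hc]

end Gt

/-- The map `f : G₀ → Gτ`, `x ↦ (x,1)τ`, induces a bijection from the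
conjugacy classes of `G₀` onto the conjugacy classes of `G̃` contained in the coset `Gτ`:
`x` and `y` are conjugate in `G₀` iff `(x,1)τ` and `(y,1)τ` are conjugate in `G̃`, and
every conjugacy class of `G̃` contained in `Gτ` contains an element of the form `(x,1)τ`. -/
theorem classes_of_G0_biject_with_classes_in_coset {G₀ : Type*} [Group G₀] :
    (∀ x y : G₀, IsConj x y ↔ IsConj (inl (x, 1) * tau G₀) (inl (y, 1) * tau G₀)) ∧
    ∀ z : Gt G₀, z.right = Multiplicative.ofAdd 1 →
      ∃ x : G₀, IsConj z (inl (x, 1) * tau G₀) := by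
  refine ⟨fun x y => by simpa using (Gt.isConj_inl_mul_tau_iff (x, 1) (y, 1)).symm, fun z hz => ?_⟩
  rw [Gt.eq_inl_mul_tau_of_right_eq hz]
  exact ⟨_, Gt.isConj_inl_mul_tau_inl_mul_one_mul_tau z.left⟩
end

section
/- For every real number q with q > 1: if P' is a 3×3 real upper triangular matrix with all diagonal entries equal to 1 and Λ' is a 3×3 real diagonal matrix such that P'ᵀ Λ' P' = Ω, where Ω = [[1, q²−1, 1], [q²−1, q⁶−q², −q⁶+q⁴], [1, −q⁶+q⁴, q⁸]], then P' = [[1, q²−1, 1], [0, 1, −1], [0, 0, 1]] and Λ' = diag(1, q⁶−q⁴+q²−1, q⁸−q⁶+q⁴−q²). -/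
/-!
A factorisation `Ω = Pᵀ Λ P` with `P` unipotent upper triangular and `Λ` diagonal and invertible
is unique: if `Pᵀ Λ P = Qᵀ Λ' Q`, then `(P Q⁻¹)ᵀ Λ = Λ' (Q P⁻¹)` is at once lower and upper
triangular, hence diagonal, which forces `Λ = Λ'` and `P Q⁻¹ = 1`. For the Suzuki groups it
therefore suffices to check that the explicit `P` and `Λ` factor `Ω`, the diagonal entries
`1`, `(q² - 1)(q⁴ + 1)`, `q²(q² - 1)(q⁴ + 1)` of `Λ` being nonzero for `q > 1`.
-/

namespace Matrix

variable {n R : Type*} [Fintype n] [LinearOrder n] [CommRing R]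

def IsUnitUpperTriangular (M : Matrix n n R) : Prop :=
  M.IsUpperTriangular ∧ ∀ i, M i i = 1

theorem IsUpperTriangular.mul_apply_self {A B : Matrix n n R} (hA : A.IsUpperTriangular)
    (hB : B.IsUpperTriangular) (i : n) : (A * B) i i = A i i * B i i := by
  refine (Finset.sum_eq_single i (fun j _ hji => ?_) (by simp)).trans rfl
  rcases hji.lt_or_gt with hj | hj
  · exact mul_eq_zero_of_left (hA hj) _
  · exact mul_eq_zero_of_right _ (hB hj)

namespace IsUnitUpperTriangular

variable {M N : Matrix n n R}

theorem isUnit_det (hM : M.IsUnitUpperTriangular) : IsUnit M.det := by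
  simp [det_of_isUpperTriangular hM.1, hM.2]

theorem mul (hM : M.IsUnitUpperTriangular) (hN : N.IsUnitUpperTriangular) :
    (M * N).IsUnitUpperTriangular :=
  ⟨hM.1.mul hN.1, fun i => by rw [hM.1.mul_apply_self hN.1, hM.2, hN.2, one_mul]⟩

theorem inv (hM : M.IsUnitUpperTriangular) : M⁻¹.IsUnitUpperTriangular := by
  have := M.invertibleOfIsUnitDet hM.isUnit_det
  have hinv : M⁻¹.IsUpperTriangular := blockTriangular_inv_of_blockTriangular hM.1
  refine ⟨hinv, fun i => ?_⟩
  have := congrFun (congrFun (M.mul_nonsing_inv hM.isUnit_det) i) i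
  rwa [hM.1.mul_apply_self hinv, hM.2, one_mul, one_apply_eq] at this

variable [NoZeroDivisors R]

theorem eq_one_of_transpose_mul_diagonal_eq_diagonal_mul (hM : M.IsUnitUpperTriangular)
    (hN : N.IsUnitUpperTriangular) {d e : n → R} (hd : ∀ i, d i ≠ 0)
    (h : Mᵀ * diagonal d = diagonal e * N) : M = 1 ∧ d = e := by
  have hij : ∀ i j, M j i * d j = e i * N i j := fun i j => by
    simpa using congrFun (congrFun h i) j
  refine ⟨ext fun i j => ?_, funext fun i => by simpa [hM.2, hN.2] using hij i i⟩
  rcases lt_trichotomy i j with hlt | rfl | hgt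
  · have := hij j i
    rw [hN.1 hlt, mul_zero] at this
    rw [(mul_eq_zero.mp this).resolve_right (hd i), one_apply_ne hlt.ne]
  · rw [hM.2, one_apply_eq]
  · rw [hM.1 hgt, one_apply_ne hgt.ne']

theorem eq_and_eq_of_transpose_mul_diagonal_mul_eq (hM : M.IsUnitUpperTriangular)
    (hN : N.IsUnitUpperTriangular) {d e : n → R} (hd : ∀ i, d i ≠ 0)
    (h : Mᵀ * diagonal d * M = Nᵀ * diagonal e * N) : M = N ∧ d = e := by
  have hcancel : (M * N⁻¹)ᵀ * diagonal d = diagonal e * (N * M⁻¹) := by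
    calc (M * N⁻¹)ᵀ * diagonal d = N⁻¹ᵀ * (Mᵀ * diagonal d * M) * M⁻¹ := by
          simp only [transpose_mul, Matrix.mul_assoc, mul_nonsing_inv _ hM.isUnit_det,
            Matrix.mul_one]
      _ = diagonal e * (N * M⁻¹) := by
          rw [h, ← Matrix.mul_assoc, ← Matrix.mul_assoc, ← Matrix.mul_assoc, ← transpose_mul,
            mul_nonsing_inv _ hN.isUnit_det, transpose_one, Matrix.one_mul, Matrix.mul_assoc]
  obtain ⟨hone, rfl⟩ := eq_one_of_transpose_mul_diagonal_eq_diagonal_mul (hM.mul hN.inv)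
    (hN.mul hM.inv) hd hcancel
  refine ⟨?_, rfl⟩
  calc M = M * N⁻¹ * N := (nonsing_inv_mul_cancel_right _ _ hN.isUnit_det).symm
    _ = N := by rw [hone, one_mul]

end IsUnitUpperTriangular

end Matrix

open Matrix

/-- Uniqueness in Lusztig's algorithm for the Suzuki groups `²B₂(q²)`:
for `q > 1`, if `P'` is unipotent upper triangular and `Λ'` is diagonal with
`P'ᵀ Λ' P' = Ω`, then `P'` and `Λ'` are the matrices of Statement 13. -/
theorem suzuki_lusztig_matrix_uniqueness (q : ℝ) (hq : 1 < q)
    (P' Λ' : Matrix (Fin 3) (Fin 3) ℝ)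
    (hP'upper : ∀ i j : Fin 3, j < i → P' i j = 0)
    (hP'diag : ∀ i : Fin 3, P' i i = 1)
    (hΛ'diag : ∀ i j : Fin 3, i ≠ j → Λ' i j = 0)
    (h : P'ᵀ * Λ' * P' =
      !![1, q ^ 2 - 1, 1;
         q ^ 2 - 1, q ^ 6 - q ^ 2, -q ^ 6 + q ^ 4;
         1, -q ^ 6 + q ^ 4, q ^ 8]) :
    P' = !![1, q ^ 2 - 1, 1; 0, 1, -1; 0, 0, 1] ∧
    Λ' = Matrix.diagonal ![1, q ^ 6 - q ^ 4 + q ^ 2 - 1, q ^ 8 - q ^ 6 + q ^ 4 - q ^ 2] := by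
  set P₀ : Matrix (Fin 3) (Fin 3) ℝ := !![1, q ^ 2 - 1, 1; 0, 1, -1; 0, 0, 1]
  set d : Fin 3 → ℝ := ![1, q ^ 6 - q ^ 4 + q ^ 2 - 1, q ^ 8 - q ^ 6 + q ^ 4 - q ^ 2]
  have hP₀ : P₀.IsUnitUpperTriangular :=
    ⟨fun i j hij => by fin_cases i <;> fin_cases j <;> simp_all [P₀], fun i => by
      fin_cases i <;> rfl⟩
  have hd : ∀ i, d i ≠ 0 := by
    have hq2 : 0 < q ^ 2 - 1 := by nlinarith
    have hd₁ : q ^ 6 - q ^ 4 + q ^ 2 - 1 = (q ^ 2 - 1) * (q ^ 4 + 1) := by ring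
    have hd₂ : q ^ 8 - q ^ 6 + q ^ 4 - q ^ 2 = q ^ 2 * ((q ^ 2 - 1) * (q ^ 4 + 1)) := by ring
    have hq4 : q ^ 4 + 1 ≠ 0 := by positivity
    intro i
    fin_cases i <;> simp [d, hd₁, hd₂, hq2.ne', hq4, (zero_lt_one.trans hq).ne']
  have hΩ : P₀ᵀ * diagonal d * P₀ = P'ᵀ * diagonal Λ'.diag * P' := by
    rw [IsDiag.diagonal_diag hΛ'diag, h]
    ext i j
    fin_cases i <;> fin_cases j <;> simp [P₀, d, Matrix.mul_apply, Fin.sum_univ_three] <;> ring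
  obtain ⟨hP, hΛ⟩ := hP₀.eq_and_eq_of_transpose_mul_diagonal_mul_eq ⟨hP'upper, hP'diag⟩ hd hΩ
  exact ⟨hP.symm, by rw [hΛ, IsDiag.diagonal_diag hΛ'diag]⟩
end

section
/- For every real number q, the 4×4 real matrices P = [[1, 1−q², q⁴−1, 1], [0, 1, −1, 1], [0, 0, 1, −1], [0, 0, 0, 1]] and Λ = diag(1, p₁(q), q²·p₁(q), q⁴·p₁(q)), where p₁(q) = (q⁴−1)(q⁴−q²+1), satisfy Pᵀ Λ P = Ω, where Ω is the symmetric 4×4 matrix [[1, 1−q², q⁴−1, 1], [1−q², q⁸−q⁶+q⁴−q², −q⁸+q⁴, q⁸−q⁶], [q⁴−1, −q⁸+q⁴, q¹⁰+q⁸−q⁶−q⁴, −q¹⁰+q⁶], [1, q⁸−q⁶, −q¹⁰+q⁶, q¹²]]. -/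
open Matrix

theorem Matrix.transpose_mul_diagonal_mul_apply {m n R : Type*} [Fintype m] [DecidableEq m]
    [NonUnitalNonAssocSemiring R] (P : Matrix m n R) (d : m → R) (i j : n) :
    (Pᵀ * diagonal d * P) i j = ∑ k, P k i * d k * P k j := by
  rw [mul_apply]
  simp only [mul_diagonal, transpose_apply]

/-- For Lusztig's algorithm for the Ree groups `²G₂(q²)`:
the matrices `P` (unipotent upper triangular), `Λ = diag(1, p₁(q), q²p₁(q), q⁴p₁(q))`
with `p₁(q) = (q⁴ − 1)(q⁴ − q² + 1)`, and `Ω` satisfy `Pᵀ Λ P = Ω`, as a polynomial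
identity in the real variable `q`. -/
theorem ree_g2_lusztig_matrix_identity (q : ℝ) :
    (!![1, 1 - q ^ 2, q ^ 4 - 1, 1;
        0, 1, -1, 1;
        0, 0, 1, -1;
        0, 0, 0, 1] : Matrix (Fin 4) (Fin 4) ℝ)ᵀ *
      Matrix.diagonal
        ![1, (q ^ 4 - 1) * (q ^ 4 - q ^ 2 + 1),
          q ^ 2 * ((q ^ 4 - 1) * (q ^ 4 - q ^ 2 + 1)),
          q ^ 4 * ((q ^ 4 - 1) * (q ^ 4 - q ^ 2 + 1))] *
      !![1, 1 - q ^ 2, q ^ 4 - 1, 1;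
         0, 1, -1, 1;
         0, 0, 1, -1;
         0, 0, 0, 1] =
    !![1, 1 - q ^ 2, q ^ 4 - 1, 1;
       1 - q ^ 2, q ^ 8 - q ^ 6 + q ^ 4 - q ^ 2, -q ^ 8 + q ^ 4, q ^ 8 - q ^ 6;
       q ^ 4 - 1, -q ^ 8 + q ^ 4, q ^ 10 + q ^ 8 - q ^ 6 - q ^ 4, -q ^ 10 + q ^ 6;
       1, q ^ 8 - q ^ 6, -q ^ 10 + q ^ 6, q ^ 12] := by
  ext i j
  rw [transpose_mul_diagonal_mul_apply, Fin.sum_univ_four]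
  fin_cases i <;> fin_cases j <;> simp <;> ring
end
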